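/- For real r with 0 < r, the limit as h → 0⁺ of K_r^{(h)}(λ) = exp(−i ∫₀^∞ (sin(pλ)/p) · sinh((p/2)(π/h − r)) / (cosh(p/2) sinh(pπ/(2h))) dp) equals Γ(−iλ/2 + (r+3)/4)Γ(iλ/2 + (r+1)/4) / (Γ(iλ/2 + (r+3)/4)Γ(−iλ/2 + (r+1)/4)), where Γ is the Euler gamma function. -/

import Mathlib

open Real Complex Filter MeasureTheory

/-- The function K_r^{(h)}(λ) defined by the integral formula. -/
noncomputable def Kfun (h r lam : ℝ) : ℂ :=
  Complex.exp (-Complex.I *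
    ((∫ p in Set.Ioi (0 : ℝ),
        Real.sin (p * lam) / p *
          (Real.sinh (p / 2 * (π / h - r)) /
            (Real.cosh (p / 2) * Real.sinh (p * π / (2 * h)))) : ℝ) : ℂ))

/-!
With `A = pπ/(2h)` the integrand is `sin(pλ)/p · (sinh(A - rp/2)/sinh A)/cosh(p/2)`. The identity
`e^{-B} sinh A - sinh(A - B) = e^{-A} sinh B` shows that `0 ≤ sinh(A - B)/sinh A ≤ e^{-B}` for
`0 ≤ B ≤ A` and that the ratio tends to `e^{-B}` as `A → ∞`, so by dominated convergence the
exponent tends to `∫ sin(pλ)/p · e^{-rp/2}/cosh(p/2) dp`. Expanding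
`e^{-rp/2}/cosh(p/2) = 2 ∑ⱼ (e^{-(s+2j)p} - e^{-(s+2j+1)p})` with `s = (r+1)/2` (a series of
positive terms, so dominated convergence applies again) and using
`∫ sin(pλ)/p · e^{-cp} dp = arctan(λ/c)` gives `2 ∑ⱼ (arctan(λ/(s+2j)) - arctan(λ/(s+2j+1)))`.

On the Gamma side, Euler's limit `Γ(z) = lim n^z n!/∏ⱼ(z+j)` expresses
`Γ(a)Γ(b)/(Γ(ā)Γ(b̄))`, when `Im a + Im b = 0`, as the limit of `∏ⱼ (ā+j)/(a+j) · (b̄+j)/(b+j)`,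
and `z̄/z = exp(-2i arg z)`. For `a = (r+3)/4 - iλ/2`, `b = (r+1)/4 + iλ/2` the arguments of
`a+j` and `b+j` are exactly `-arctan(λ/(s+2j+1))` and `arctan(λ/(s+2j))`.
-/

open Set Finset ComplexConjugate Topology

theorem abs_sin_mul_div_le (p x : ℝ) : |Real.sin (p * x) / p| ≤ |x| := by
  rw [abs_div]
  refine div_le_of_le_mul₀ (abs_nonneg p) (abs_nonneg x) ?_
  rw [mul_comm |x|, ← abs_mul]
  exact Real.abs_sin_le_abs

theorem integrableOn_exp_neg_mul_Ioi {c : ℝ} (hc : 0 < c) :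
    IntegrableOn (fun p : ℝ => Real.exp (-(c * p))) (Ioi 0) := by
  simpa only [neg_mul] using exp_neg_integrableOn_Ioi 0 hc

theorem integral_cos_mul_mul_exp_neg {c : ℝ} (hc : 0 < c) (l : ℝ) :
    ∫ p in Ioi 0, Real.cos (p * l) * Real.exp (-(c * p)) = c / (c ^ 2 + l ^ 2) := by
  have hre : (-c + l * I).re < 0 := by simpa using hc
  have hpt : ∀ p : ℝ,
      Real.cos (p * l) * Real.exp (-(c * p)) = (Complex.exp ((-c + l * I) * p)).re := by
    intro p
    rw [show (-c + l * I) * p = ((-(c * p) : ℝ) : ℂ) + ((p * l : ℝ) : ℂ) * I by push_cast; ring,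
      Complex.exp_add, ← ofReal_exp, re_ofReal_mul, exp_ofReal_mul_I_re]
    ring
  simp_rw [hpt]
  have hint := integral_re (integrableOn_exp_mul_complex_Ioi hre 0)
  simp only [RCLike.re_to_complex] at hint
  rw [hint, integral_exp_mul_complex_Ioi hre 0]
  have hden : c ^ 2 + l ^ 2 ≠ 0 := by positivity
  simp [div_re, normSq_apply, field]

theorem integrableOn_sin_mul_div_mul_exp_neg {c : ℝ} (hc : 0 < c) (x : ℝ) :
    IntegrableOn (fun p : ℝ => Real.sin (p * x) / p * Real.exp (-(c * p))) (Ioi 0) := by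
  refine ((integrableOn_exp_neg_mul_Ioi hc).const_mul |x|).mono' (by fun_prop) ?_
  filter_upwards with p
  rw [norm_mul, Real.norm_eq_abs, Real.norm_of_nonneg (Real.exp_pos _).le]
  exact mul_le_mul_of_nonneg_right (abs_sin_mul_div_le p x) (Real.exp_pos _).le

theorem hasDerivAt_integral_sin_mul_div_mul_exp_neg {c : ℝ} (hc : 0 < c) (x : ℝ) :
    HasDerivAt (fun x => ∫ p in Ioi 0, Real.sin (p * x) / p * Real.exp (-(c * p)))
      (c / (c ^ 2 + x ^ 2)) x := by
  rw [← integral_cos_mul_mul_exp_neg hc x]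
  refine (hasDerivAt_integral_of_dominated_loc_of_deriv_le (x₀ := x) univ_mem
    (F' := fun y p => Real.cos (p * y) * Real.exp (-(c * p)))
    (Eventually.of_forall fun y => (integrableOn_sin_mul_div_mul_exp_neg hc y).aestronglyMeasurable)
    (integrableOn_sin_mul_div_mul_exp_neg hc x) (by fun_prop) ?_ (integrableOn_exp_neg_mul_Ioi hc)
    ?_).2
  · filter_upwards with p y _
    rw [norm_mul, Real.norm_of_nonneg (Real.exp_pos _).le]
    exact mul_le_of_le_one_left (Real.exp_pos _).le (Real.abs_cos_le_one _)
  · filter_upwards [ae_restrict_mem measurableSet_Ioi] with p (hp : 0 < p) y _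
    refine ((((hasDerivAt_id' y).const_mul p).sin.div_const p).mul_const _).congr_deriv ?_
    field_simp

theorem integral_sin_mul_div_mul_exp_neg {c : ℝ} (hc : 0 < c) (l : ℝ) :
    ∫ p in Ioi 0, Real.sin (p * l) / p * Real.exp (-(c * p)) = Real.arctan (l / c) := by
  have harctan : ∀ x : ℝ, HasDerivAt (fun x => Real.arctan (x / c)) (c / (c ^ 2 + x ^ 2)) x := by
    intro x
    convert ((hasDerivAt_id' x).div_const c).arctan using 1
    field_simp
  have hF := hasDerivAt_integral_sin_mul_div_mul_exp_neg hc
  refine isOpen_univ.eqOn_of_deriv_eq isPreconnected_univ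
    (fun x _ => (hF x).differentiableAt.differentiableWithinAt)
    (fun x _ => (harctan x).differentiableAt.differentiableWithinAt)
    (fun x _ => (hF x).deriv.trans (harctan x).deriv.symm) (mem_univ 0) (by simp) (mem_univ l)

theorem integrableOn_exp_neg_mul_div_cosh {r : ℝ} (hr : -1 < r) :
    IntegrableOn (fun p : ℝ => Real.exp (-(r * p / 2)) / Real.cosh (p / 2)) (Ioi 0) := by
  refine ((integrableOn_exp_neg_mul_Ioi (c := (r + 1) / 2) (by linarith)).const_mul 2).mono'
    (Continuous.div (by fun_prop) (by fun_prop) fun p => (Real.cosh_pos _).ne').aestronglyMeasurable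
    (Eventually.of_forall fun p => ?_)
  have hsplit : Real.exp (-(r * p / 2)) = Real.exp (-((r + 1) / 2 * p)) * Real.exp (p / 2) := by
    rw [← Real.exp_add]
    ring_nf
  rw [Real.norm_of_nonneg (by positivity), div_le_iff₀ (Real.cosh_pos _), Real.cosh_eq, hsplit]
  nlinarith [mul_pos (Real.exp_pos (-((r + 1) / 2 * p))) (Real.exp_pos (-(p / 2)))]

theorem hasSum_exp_neg_sub_exp_neg {p : ℝ} (hp : 0 < p) (r : ℝ) :
    HasSum (fun j : ℕ => 2 * (Real.exp (-(((r + 1) / 2 + 2 * j) * p)) -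
      Real.exp (-(((r + 1) / 2 + 2 * j + 1) * p))))
      (Real.exp (-(r * p / 2)) / Real.cosh (p / 2)) := by
  set u := Real.exp (-(p / 2)) with hu
  set E := Real.exp (-(r * p / 2))
  have hu0 : 0 < u := Real.exp_pos _
  have hu1 : u < 1 := Real.exp_lt_one_iff.mpr (by linarith)
  have hexp : ∀ (k : ℕ) (j : ℕ), Real.exp (-(((r + 1) / 2 + 2 * j + k) * p)) =
      E * u ^ (2 * k + 1) * (u ^ 4) ^ j := by
    intro k j
    rw [hu, ← pow_mul, ← Real.exp_nat_mul, ← Real.exp_nat_mul, ← Real.exp_add, ← Real.exp_add]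
    congr 1
    push_cast
    ring
  have hterm : ∀ j : ℕ, 2 * (Real.exp (-(((r + 1) / 2 + 2 * j) * p)) -
      Real.exp (-(((r + 1) / 2 + 2 * j + 1) * p))) = 2 * E * (u - u ^ 3) * (u ^ 4) ^ j := by
    intro j
    have h0 := hexp 0 j
    have h1 := hexp 1 j
    push_cast at h0 h1
    rw [add_zero] at h0
    rw [h0, h1]
    ring
  have hcosh : Real.cosh (p / 2) = (u⁻¹ + u) / 2 := by
    rw [Real.cosh_eq, hu, Real.exp_neg, inv_inv, add_comm]
  have hu4 : u ^ 4 < 1 := pow_lt_one₀ hu0.le hu1 four_ne_zero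
  have hsum : 2 * E * (u - u ^ 3) * (1 - u ^ 4)⁻¹ = E / Real.cosh (p / 2) := by
    have : 1 - u ^ 4 ≠ 0 := (sub_pos.mpr hu4).ne'
    rw [hcosh]
    field_simp
    ring
  simp_rw [hterm, ← hsum]
  exact (hasSum_geometric_of_lt_one (by positivity) hu4).mul_left _

theorem hasSum_two_mul_arctan_sub_arctan {r : ℝ} (hr : -1 < r) (l : ℝ) :
    HasSum (fun j : ℕ => 2 * (Real.arctan (l / ((r + 1) / 2 + 2 * j)) -
      Real.arctan (l / ((r + 1) / 2 + 2 * j + 1))))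
      (∫ p in Ioi 0, Real.sin (p * l) / p * (Real.exp (-(r * p / 2)) / Real.cosh (p / 2))) := by
  set e : ℕ → ℝ → ℝ := fun j p => 2 * (Real.exp (-(((r + 1) / 2 + 2 * j) * p)) -
    Real.exp (-(((r + 1) / 2 + 2 * j + 1) * p)))
  have he : ∀ j, ∀ p > (0 : ℝ), 0 ≤ e j p := fun j p hp => by
    have : ((r + 1) / 2 + 2 * j) * p ≤ ((r + 1) / 2 + 2 * j + 1) * p := by nlinarith
    have := Real.exp_le_exp.mpr (neg_le_neg this)
    simp only [e]
    linarith
  have hs : 0 < (r + 1) / 2 := by linarith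
  have hc0 : ∀ j : ℕ, 0 < (r + 1) / 2 + 2 * j := fun j => by positivity
  have hc1 : ∀ j : ℕ, 0 < (r + 1) / 2 + 2 * j + 1 := fun j => by positivity
  have hint : ∀ j : ℕ, ∫ p in Ioi 0, Real.sin (p * l) / p * e j p =
      2 * (Real.arctan (l / ((r + 1) / 2 + 2 * j)) -
        Real.arctan (l / ((r + 1) / 2 + 2 * j + 1))) := by
    intro j
    have h0 := integrableOn_sin_mul_div_mul_exp_neg (hc0 j) l
    have h1 := integrableOn_sin_mul_div_mul_exp_neg (hc1 j) l
    simp only [e, mul_sub, mul_left_comm _ (2 : ℝ)]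
    rw [integral_sub (h0.const_mul 2) (h1.const_mul 2), integral_const_mul, integral_const_mul,
      integral_sin_mul_div_mul_exp_neg (hc0 j), integral_sin_mul_div_mul_exp_neg (hc1 j)]
  simp_rw [← hint]
  refine hasSum_integral_of_dominated_convergence (fun j p => |l| * e j p) (fun j => ?_)
    (fun j => ?_) ?_ ?_ ?_
  · exact Measurable.aestronglyMeasurable (by fun_prop)
  · filter_upwards [ae_restrict_mem measurableSet_Ioi] with p hp
    rw [norm_mul, Real.norm_eq_abs, Real.norm_of_nonneg (he j p hp)]
    exact mul_le_mul_of_nonneg_right (abs_sin_mul_div_le p l) (he j p hp)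
  · filter_upwards [ae_restrict_mem measurableSet_Ioi] with p hp
    exact ((hasSum_exp_neg_sub_exp_neg hp r).mul_left |l|).summable
  · refine ((integrableOn_exp_neg_mul_div_cosh hr).const_mul |l|).congr ?_
    filter_upwards [ae_restrict_mem measurableSet_Ioi] with p hp
    exact (((hasSum_exp_neg_sub_exp_neg hp r).mul_left |l|).tsum_eq).symm
  · filter_upwards [ae_restrict_mem measurableSet_Ioi] with p hp
    exact (hasSum_exp_neg_sub_exp_neg hp r).mul_left _

theorem Real.exp_neg_mul_sinh_sub_sinh_sub (A B : ℝ) :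
    Real.exp (-B) * Real.sinh A - Real.sinh (A - B) = Real.exp (-A) * Real.sinh B := by
  simp only [Real.sinh_eq, Real.exp_sub, Real.exp_neg]
  field_simp
  ring

theorem Real.abs_sinh_sub_div_sinh_le {A B : ℝ} (hB : 0 ≤ B) (hBA : B ≤ A) :
    |Real.sinh (A - B) / Real.sinh A| ≤ Real.exp (-B) := by
  rcases (hB.trans hBA).eq_or_lt with rfl | hA
  · simp [Real.exp_nonneg]
  have hsinhA : 0 < Real.sinh A := Real.sinh_pos_iff.mpr hA
  rw [abs_of_nonneg (div_nonneg (Real.sinh_nonneg_iff.mpr (sub_nonneg.mpr hBA)) hsinhA.le),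
    div_le_iff₀ hsinhA]
  have := Real.exp_neg_mul_sinh_sub_sinh_sub A B
  nlinarith [Real.exp_pos (-A), Real.sinh_nonneg_iff.mpr hB]

theorem Real.tendsto_sinh_sub_div_sinh_atTop (B : ℝ) :
    Tendsto (fun A => Real.sinh (A - B) / Real.sinh A) atTop (𝓝 (Real.exp (-B))) := by
  have hsinh : Tendsto Real.sinh atTop atTop :=
    tendsto_atTop_mono' atTop
      (eventually_ge_atTop 0 |>.mono fun A hA => Real.self_le_sinh_iff.mpr hA) tendsto_id
  have hlim : Tendsto (fun A => Real.exp (-B) - Real.sinh B * (Real.exp (-A) / Real.sinh A)) atTop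
      (𝓝 (Real.exp (-B))) := by
    simpa using (Real.tendsto_exp_neg_atTop_nhds_zero.div_atTop hsinh).const_mul
      (Real.sinh B) |>.const_sub (Real.exp (-B))
  refine hlim.congr' ?_
  filter_upwards [eventually_gt_atTop 0] with A hA
  have := Real.exp_neg_mul_sinh_sub_sinh_sub A B
  field_simp [(Real.sinh_pos_iff.mpr hA).ne']
  linarith

theorem tendsto_integral_sinh_div_cosh_mul_sinh {r : ℝ} (hr : 0 < r) (l : ℝ) :
    Tendsto (fun h : ℝ => ∫ p in Ioi 0, Real.sin (p * l) / p *
        (Real.sinh (p / 2 * (π / h - r)) / (Real.cosh (p / 2) * Real.sinh (p * π / (2 * h)))))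
      (𝓝[>] 0)
      (𝓝 (∫ p in Ioi 0, Real.sin (p * l) / p * (Real.exp (-(r * p / 2)) / Real.cosh (p / 2)))) := by
  have hform : ∀ h p : ℝ,
      Real.sinh (p / 2 * (π / h - r)) / (Real.cosh (p / 2) * Real.sinh (p * π / (2 * h))) =
        Real.sinh (p * π / (2 * h) - r * p / 2) / Real.sinh (p * π / (2 * h)) /
          Real.cosh (p / 2) := by
    intro h p
    rw [div_div, mul_comm (Real.cosh _)]
    ring_nf
  simp_rw [hform]
  refine tendsto_integral_filter_of_dominated_convergence
    (fun p => |l| * (Real.exp (-(r * p / 2)) / Real.cosh (p / 2)))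
    (Eventually.of_forall fun h => Measurable.aestronglyMeasurable (by fun_prop)) ?_
    ((integrableOn_exp_neg_mul_div_cosh (by linarith)).const_mul |l|) ?_
  · filter_upwards [Ioo_mem_nhdsGT (div_pos pi_pos hr)] with h ⟨hh, hhr⟩
    filter_upwards [ae_restrict_mem measurableSet_Ioi] with p (hp : 0 < p)
    have hBA : r * p / 2 ≤ p * π / (2 * h) := by
      rw [le_div_iff₀ (by positivity)]
      have := (lt_div_iff₀ hr).mp hhr
      nlinarith
    rw [norm_mul, Real.norm_eq_abs, norm_div, Real.norm_eq_abs,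
      Real.norm_of_nonneg (Real.cosh_pos _).le]
    gcongr ?_ * (?_ / _)
    · exact abs_sin_mul_div_le p l
    · exact Real.abs_sinh_sub_div_sinh_le (by positivity) hBA
  · filter_upwards [ae_restrict_mem measurableSet_Ioi] with p (hp : 0 < p)
    have hA : Tendsto (fun h : ℝ => p * π / (2 * h)) (𝓝[>] 0) atTop :=
      (tendsto_inv_nhdsGT_zero.const_mul_atTop (by positivity : 0 < p * π / 2)).congr
        fun h => by ring
    exact (((Real.tendsto_sinh_sub_div_sinh_atTop _).comp hA).div_const _).const_mul _

theorem Complex.arg_ofReal_add_ofReal_mul_I {x y : ℝ} (hx : 0 < x) :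
    arg (x + y * I) = Real.arctan (y / x) := by
  have hlt := abs_lt.mp (abs_arg_lt_pi_div_two_iff.mpr (Or.inl (by simpa using hx :
    0 < (x + y * I).re)))
  rw [← Real.arctan_tan hlt.1 hlt.2, tan_arg]
  simp

theorem Complex.conj_div_self {z : ℂ} (hz : z ≠ 0) : conj z / z = exp (-2 * arg z * I) := by
  conv_lhs => rw [← norm_mul_exp_arg_mul_I z]
  have hnorm : (‖z‖ : ℂ) ≠ 0 := by exact_mod_cast norm_ne_zero_iff.mpr hz
  rw [map_mul, ← exp_conj, map_mul, conj_ofReal, conj_ofReal, conj_I, mul_div_mul_left _ _ hnorm,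
    ← exp_sub]
  ring_nf

theorem Complex.GammaSeq_div_GammaSeq_conj {z : ℂ} (hz : 0 < z.re) {n : ℕ} (hn : n ≠ 0) :
    GammaSeq z n / GammaSeq (conj z) n =
      exp (2 * I * (z.im * Real.log n - ∑ j ∈ range (n + 1), arg (z + j))) := by
  have hzj : ∀ j : ℕ, z + j ≠ 0 := fun j h => by
    have := congrArg re h
    rw [add_re, natCast_re, zero_re] at this
    linarith [j.cast_nonneg (α := ℝ)]
  have hn' : (n : ℂ) ≠ 0 := Nat.cast_ne_zero.mpr hn
  have hpow : (n : ℂ) ^ z / (n : ℂ) ^ conj z = exp (2 * I * (z.im * Real.log n)) := by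
    rw [← cpow_sub _ _ hn', cpow_def_of_ne_zero hn', sub_conj, ← ofReal_natCast,
      ← ofReal_log n.cast_nonneg]
    push_cast
    ring_nf
  have hprod : (∏ j ∈ range (n + 1), conj (z + j)) / ∏ j ∈ range (n + 1), (z + j) =
      exp (2 * I * -∑ j ∈ range (n + 1), arg (z + j)) := by
    rw [← prod_div_distrib, prod_congr rfl fun j _ => conj_div_self (hzj j), ← exp_sum]
    push_cast
    congr 1
    rw [← sum_neg_distrib, mul_sum]
    exact sum_congr rfl fun j _ => by ring
  have hP : ∏ j ∈ range (n + 1), (z + j) ≠ 0 := prod_ne_zero_iff.mpr fun j _ => hzj j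
  have hconj : ∏ j ∈ range (n + 1), (conj z + j) = ∏ j ∈ range (n + 1), conj (z + j) := by
    simp
  have hfac : (n.factorial : ℂ) ≠ 0 := Nat.cast_ne_zero.mpr n.factorial_ne_zero
  rw [GammaSeq, GammaSeq, hconj, mul_sub, sub_eq_add_neg, ← mul_neg, exp_add, ← hpow, ← hprod]
  have hpow' : (n : ℂ) ^ conj z ≠ 0 := by simp [cpow_eq_zero_iff, hn']
  have hP' : ∏ j ∈ range (n + 1), conj (z + j) ≠ 0 := by
    rwa [← map_prod, map_ne_zero]
  field_simp

theorem Complex.Gamma_mul_Gamma_div_Gamma_conj_mul_Gamma_conj {a b : ℂ} (ha : 0 < a.re)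
    (hb : 0 < b.re) (hab : a.im + b.im = 0) {θ : ℝ}
    (hθ : HasSum (fun j : ℕ => 2 * (arg (a + j) + arg (b + j))) θ) :
    Gamma a * Gamma b / (Gamma (conj a) * Gamma (conj b)) = exp (-I * θ) := by
  have hGamma : Gamma (conj a) * Gamma (conj b) ≠ 0 :=
    mul_ne_zero (Gamma_ne_zero_of_re_pos (by simpa using ha))
      (Gamma_ne_zero_of_re_pos (by simpa using hb))
  have hlim := ((GammaSeq_tendsto_Gamma a).mul (GammaSeq_tendsto_Gamma b)).div
    ((GammaSeq_tendsto_Gamma (conj a)).mul (GammaSeq_tendsto_Gamma (conj b))) hGamma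
  have hpartial : Tendsto
      (fun n : ℕ => exp (-I * ∑ j ∈ range (n + 1), 2 * (arg (a + j) + arg (b + j))))
      atTop (𝓝 (exp (-I * θ))) :=
    ((continuous_exp.comp (continuous_const.mul continuous_ofReal)).tendsto θ).comp
      (hθ.tendsto_sum_nat.comp (tendsto_add_atTop_nat 1))
  refine tendsto_nhds_unique hlim (hpartial.congr' ?_)
  filter_upwards [eventually_ne_atTop 0] with n hn
  rw [Pi.div_apply, mul_div_mul_comm, GammaSeq_div_GammaSeq_conj ha hn,
    GammaSeq_div_GammaSeq_conj hb hn, ← exp_add]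
  congr 1
  push_cast
  simp only [mul_add, sum_add_distrib, ← mul_sum]
  have hab' : (a.im : ℂ) + b.im = 0 := by exact_mod_cast hab
  linear_combination (-2 * I * log n) * hab'

theorem two_mul_arg_add_arg {r : ℝ} (hr : -1 < r) (lam : ℝ) (j : ℕ) :
    2 * (arg (-I * lam / 2 + (r + 3) / 4 + j) + arg (I * lam / 2 + (r + 1) / 4 + j)) =
      2 * (Real.arctan (lam / ((r + 1) / 2 + 2 * j)) -
        Real.arctan (lam / ((r + 1) / 2 + 2 * j + 1))) := by
  have ha : -I * lam / 2 + (r + 3) / 4 + j =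
      (((r + 3) / 4 + j : ℝ) : ℂ) + ((-(lam / 2) : ℝ) : ℂ) * I := by
    push_cast
    ring
  have hb : I * lam / 2 + (r + 1) / 4 + j =
      (((r + 1) / 4 + j : ℝ) : ℂ) + ((lam / 2 : ℝ) : ℂ) * I := by
    push_cast
    ring
  have h1 : 0 < (r + 1) / 4 := by linarith
  have h3 : 0 < (r + 3) / 4 := by linarith
  rw [ha, hb, arg_ofReal_add_ofReal_mul_I (by positivity),
    arg_ofReal_add_ofReal_mul_I (by positivity), neg_div, Real.arctan_neg, div_div, div_div]
  ring_nf

theorem Kfun_limit (r lam : ℝ) (hr : 0 < r) :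
    Filter.Tendsto (fun h : ℝ => Kfun h r lam) (nhdsWithin 0 (Set.Ioi 0))
      (nhds (Complex.Gamma (-Complex.I * lam / 2 + (r + 3) / 4) *
          Complex.Gamma (Complex.I * lam / 2 + (r + 1) / 4) /
        (Complex.Gamma (Complex.I * lam / 2 + (r + 3) / 4) *
          Complex.Gamma (-Complex.I * lam / 2 + (r + 1) / 4)))) := by
  have hθ := hasSum_two_mul_arctan_sub_arctan (by linarith) lam
  simp_rw [← two_mul_arg_add_arg (by linarith : -1 < r) lam] at hθ
  set a : ℂ := -I * lam / 2 + (r + 3) / 4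
  set b : ℂ := I * lam / 2 + (r + 1) / 4
  have hconj_a : I * lam / 2 + (r + 3) / 4 = conj a := by simp [a, map_div₀, map_ofNat]
  have hconj_b : -I * lam / 2 + (r + 1) / 4 = conj b := by simp [b, map_div₀, map_ofNat]
  have hre : a.re = (r + 3) / 4 ∧ b.re = (r + 1) / 4 := by simp [a, b]
  rw [hconj_a, hconj_b, Gamma_mul_Gamma_div_Gamma_conj_mul_Gamma_conj (by rw [hre.1]; linarith)
    (by rw [hre.2]; linarith) (by simp [a, b, neg_div]) hθ]
  exact ((continuous_exp.comp (continuous_const.mul continuous_ofReal)).tendsto _).comp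
    (tendsto_integral_sinh_div_cosh_mul_sinh hr lam)
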